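/- arXiv:2011.08427 — 2 statements merged into one kernel-verified Lean document; each statement's English description precedes it below -/
import Mathlib

section
/- Let G be a commutative group, let Z, S : ℂ → G and ρ ∈ ℂ satisfy the functional equation Z(2ρ − s) = Z(s)·S(s) for all s ∈ ℂ. Let a : ℤ → ℤ be finitely supported, C ∈ {1,−1} and D ∈ ℤ with a(D−k) = C·a(k) for all k ∈ ℤ. Then for all s ∈ ℂ, (T_a Z)(D + 2ρ − s)^C = (T_a Z)(s) · (T_a S)(s). -/
/-!
Substituting `k ↦ D - k` in the product defining `(T_a Z)(D + 2ρ - s)` turns every factor into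
`Z(2ρ - (s - k)) ^ a(D - k) = (Z(s - k) S(s - k)) ^ (C a(k))`, so that
`(T_a Z)(D + 2ρ - s) = (T_a (Z S))(s) ^ C`. Raising to the power `C` and using `C² = 1` gives the
claim, since twisting is multiplicative in the twisted function.
-/

namespace Laurent

variable {R G : Type*} [AddCommGroupWithOne R] [CommGroup G]

noncomputable def twist (a : ℤ → ℤ) (F : R → G) (s : R) : G :=
  ∏ᶠ k : ℤ, F (s - k) ^ a k

theorem hasFiniteMulSupport_twist_factor {a : ℤ → ℤ} (ha : (Function.support a).Finite)
    (F : R → G) (s : R) : Function.HasFiniteMulSupport fun k : ℤ => F (s - k) ^ a k :=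
  ha.subset fun k hk h0 => hk (by simp [h0])

theorem twist_mul {a : ℤ → ℤ} (ha : (Function.support a).Finite) (F H : R → G) (s : R) :
    twist a (F * H) s = twist a F s * twist a H s := by
  simp only [twist, Pi.mul_apply, mul_zpow]
  exact finprod_mul_distrib (hasFiniteMulSupport_twist_factor ha F s)
    (hasFiniteMulSupport_twist_factor ha H s)

theorem twist_zpow_mul {a : ℤ → ℤ} (ha : (Function.support a).Finite) (n : ℤ) (F : R → G)
    (s : R) : twist (fun k => n * a k) F s = twist a F s ^ n := by
  simp only [twist, mul_comm n, zpow_mul]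
  exact ((zpowGroupHom n).map_finprod (hasFiniteMulSupport_twist_factor ha F s)).symm

theorem twist_reflect (a : ℤ → ℤ) (F : R → G) (c s : R) (D : ℤ) :
    twist a F (D + c - s) = twist (fun k => a (D - k)) (fun t => F (c - t)) s := by
  let reflect : ℤ ≃ ℤ := Function.Involutive.toPerm (fun k => D - k) fun k => sub_sub_cancel D k
  rw [twist, ← finprod_comp_equiv reflect]
  refine finprod_congr fun k => ?_
  change F (D + c - s - ((D - k : ℤ) : R)) ^ a (D - k) = F (c - (s - k)) ^ a (D - k)
  congr 2
  push_cast
  abel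

end Laurent

open Laurent

/-- Let `G` be a commutative group, `Z, S : ℂ → G` and `ρ ∈ ℂ` satisfy the functional equation
`Z(2ρ − s) = Z(s)·S(s)` for all `s`. Let `a : ℤ → ℤ` be finitely supported, `C ∈ {1,−1}` and
`D ∈ ℤ` with `a(D−k) = C·a(k)` for all `k`. Then for all `s ∈ ℂ`,
`(T_a Z)(D + 2ρ − s)^C = (T_a Z)(s) · (T_a S)(s)`, where
`(T_a F)(s) = ∏_k F(s−k)^{a(k)}`. -/
theorem stmt2 {G : Type*} [CommGroup G] (Z S : ℂ → G) (ρ : ℂ)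
    (hfe : ∀ s : ℂ, Z (2 * ρ - s) = Z s * S s)
    (a : ℤ → ℤ) (ha : (Function.support a).Finite)
    (C : ℤ) (hC : C = 1 ∨ C = -1) (D : ℤ)
    (haut : ∀ k : ℤ, a (D - k) = C * a k) (s : ℂ) :
    (∏ᶠ k : ℤ, Z ((D : ℂ) + 2 * ρ - s - (k : ℂ)) ^ a k) ^ C
      = (∏ᶠ k : ℤ, Z (s - (k : ℂ)) ^ a k) * ∏ᶠ k : ℤ, S (s - (k : ℂ)) ^ a k := by
  have hCC : C * C = 1 := by rcases hC with rfl | rfl <;> rfl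
  have hreflect : twist a Z (D + 2 * ρ - s) = twist a (Z * S) s ^ C := by
    rw [twist_reflect, ← twist_zpow_mul ha]
    simp only [haut, hfe]
    rfl
  change twist a Z (D + 2 * ρ - s) ^ C = twist a Z s * twist a S s
  rw [hreflect, ← zpow_mul, hCC, zpow_one, twist_mul ha]
end

section
/- Let r ≥ 1 and let F₁, …, F_r : ℂ → ℂˣ be nowhere-vanishing functions satisfying the ladder relations F_j(s) = F_{j−1}(s) · F_j(s+1) for all s ∈ ℂ and 2 ≤ j ≤ r, and F₁(s+1) = −F₁(s) for all s ∈ ℂ. Let f_r ∈ ℤ[x,x⁻¹] be the Laurent polynomial f_r(x) = (1 − x⁻¹)^r. Then for all s ∈ ℂ, (T_{f_r} F_r)(s) = −1. -/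
open LaurentPolynomial
open scoped LaurentPolynomial

/-- The coefficient of `x^k` in a Laurent polynomial `f = ∑ₖ a(k) xᵏ ∈ ℤ[x,x⁻¹]`. -/
noncomputable def coeffZ (f : ℤ[T;T⁻¹]) (k : ℤ) : ℤ := AddMonoidAlgebra.coeff f k

/-- The twisted function `(T_f F)(s) = ∏ₖ F(s−k)^{a(k)}` where `a` is the coefficient function
of the Laurent polynomial `f`. -/
noncomputable def Tw (f : ℤ[T;T⁻¹]) (F : ℂ → ℂˣ) (s : ℂ) : ℂˣ :=
  ∏ᶠ k : ℤ, F (s - (k : ℂ)) ^ coeffZ f k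

/- `T_f` is a homomorphism in `f` from addition to pointwise products, and multiplying
`f` by `x⁻¹` shifts the argument by one, so `T_{g·(1 - x⁻¹)} F = T_g (s ↦ F(s) / F(s+1))`.
The ladder relation says exactly that `s ↦ F_j(s) / F_j(s+1)` is `F_{j-1}`, so peeling off one
factor `1 - x⁻¹` at a time reduces `T_{f_r} F_r` to `F₁(s) / F₁(s+1) = -1`. -/

lemma coeffZ_sub (f g : ℤ[T;T⁻¹]) (k : ℤ) : coeffZ (f - g) k = coeffZ f k - coeffZ g k := rfl

lemma coeffZ_T (n k : ℤ) : coeffZ (T n) k = if k = n then 1 else 0 := by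
  simp [coeffZ, T_apply, eq_comm]

lemma coeffZ_mul_T (f : ℤ[T;T⁻¹]) (n k : ℤ) : coeffZ (f * T n) k = coeffZ f (k - n) := by
  simpa [coeffZ, T_apply, sub_eq_add_neg] using AddMonoidAlgebra.coeff_mul_single_apply f 1 n k

lemma hasFiniteMulSupport_zpow_coeffZ (f : ℤ[T;T⁻¹]) (u : ℤ → ℂˣ) :
    Function.HasFiniteMulSupport fun k => u k ^ coeffZ f k := by
  refine (AddMonoidAlgebra.coeff f).support.finite_toSet.subset fun k hk => ?_
  contrapose! hk
  simp_all [coeffZ]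

lemma Tw_T (n : ℤ) (F : ℂ → ℂˣ) (s : ℂ) : Tw (T n) F s = F (s - n) := by
  rw [Tw, finprod_eq_single _ n fun k hk => by rw [coeffZ_T, if_neg hk, zpow_zero],
    coeffZ_T, if_pos rfl, zpow_one]

lemma Tw_sub (f g : ℤ[T;T⁻¹]) (F : ℂ → ℂˣ) (s : ℂ) : Tw (f - g) F s = Tw f F s / Tw g F s := by
  simp only [Tw, coeffZ_sub, zpow_sub]
  exact finprod_div_distrib (hasFiniteMulSupport_zpow_coeffZ f _)
    (hasFiniteMulSupport_zpow_coeffZ g _)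

lemma Tw_mul_T (f : ℤ[T;T⁻¹]) (n : ℤ) (F : ℂ → ℂˣ) (s : ℂ) :
    Tw (f * T n) F s = Tw f F (s - n) := by
  simp only [Tw, coeffZ_mul_T]
  rw [← finprod_comp_equiv (Equiv.addRight n)]
  simp [sub_sub, add_comm]

lemma Tw_div (f : ℤ[T;T⁻¹]) (F G : ℂ → ℂˣ) (s : ℂ) :
    Tw f (fun t => F t / G t) s = Tw f F s / Tw f G s := by
  simp only [Tw, div_zpow]
  exact finprod_div_distrib (hasFiniteMulSupport_zpow_coeffZ f _)
    (hasFiniteMulSupport_zpow_coeffZ f _)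

lemma Tw_comp_add_const (f : ℤ[T;T⁻¹]) (F : ℂ → ℂˣ) (c s : ℂ) :
    Tw f (fun t => F (t + c)) s = Tw f F (s + c) := by
  simp only [Tw, sub_add_eq_add_sub]

lemma Tw_mul_one_sub_T_neg_one (f : ℤ[T;T⁻¹]) (F : ℂ → ℂˣ) (s : ℂ) :
    Tw (f * (1 - T (-1))) F s = Tw f (fun t => F t / F (t + 1)) s := by
  rw [mul_one_sub, Tw_sub, Tw_mul_T, Tw_div, Tw_comp_add_const]
  push_cast
  rw [sub_neg_eq_add]

lemma Tw_one_sub_T_neg_one (F : ℂ → ℂˣ) (s : ℂ) : Tw (1 - T (-1)) F s = F s / F (s + 1) := by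
  rw [Tw_sub, ← T_zero, Tw_T, Tw_T]
  push_cast
  rw [sub_zero, sub_neg_eq_add]

/-- Let `r ≥ 1` and let `F₁, …, F_r : ℂ → ℂˣ` be nowhere-vanishing functions satisfying the
ladder relations `F_j(s) = F_{j−1}(s)·F_j(s+1)` for all `s ∈ ℂ` and `2 ≤ j ≤ r`, and
`F₁(s+1) = −F₁(s)` for all `s ∈ ℂ`. Let `f_r(x) = (1 − x⁻¹)^r ∈ ℤ[x,x⁻¹]`. Then for all
`s ∈ ℂ`, `(T_{f_r} F_r)(s) = −1`. -/
theorem stmt4 (r : ℕ) (hr : 1 ≤ r) (F : ℕ → ℂ → ℂˣ)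
    (hlad : ∀ j : ℕ, 2 ≤ j → j ≤ r → ∀ s : ℂ, F j s = F (j - 1) s * F j (s + 1))
    (hF1 : ∀ s : ℂ, F 1 (s + 1) = -F 1 s) (s : ℂ) :
    Tw ((1 - T (-1)) ^ r) (F r) s = -1 := by
  suffices ∀ j, 1 ≤ j → j ≤ r → ∀ t, Tw ((1 - T (-1)) ^ j) (F j) t = -1 from this r hr le_rfl s
  intro j hj
  induction j, hj using Nat.le_induction with
  | base =>
    intro _ t
    rw [pow_one, Tw_one_sub_T_neg_one, hF1, div_neg, div_self']
  | succ j hj ih =>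
    intro hjr t
    have hstep : (fun u => F (j + 1) u / F (j + 1) (u + 1)) = F j := by
      funext u
      rw [div_eq_iff_eq_mul, hlad (j + 1) (by omega) hjr u, Nat.add_sub_cancel]
    rw [pow_succ, Tw_mul_one_sub_T_neg_one, hstep]
    exact ih (by omega) t
end
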